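/- arXiv:1412.4074 — 5 statements merged into one kernel-verified Lean document; each statement's English description precedes it below -/
import Mathlib

section
/- Let p and q be finite lists over an arbitrary type, each containing no duplicate elements, with p ≠ q. Then the length of the longest common prefix of p and q plus the length of the longest common suffix of p and q is at most min(|p|, |q|). (This guarantees that, for a transition between two distinct acyclic traceroute paths, the unchanged initial portion and the unchanged final portion do not overlap in either path, so the changed subpaths δ_pre and δ_post are well defined.) -/
/-- The longest common prefix of two lists. -/
def longestCommonPrefix {α : Type*} [DecidableEq α] : List α → List α → List α
  | a :: as, b :: bs => if a = b then a :: longestCommonPrefix as bs else []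
  | _, _ => []

/-- The longest common suffix of two lists: the reverse of the longest common
prefix of their reverses. -/
def longestCommonSuffix {α : Type*} [DecidableEq α] (p q : List α) : List α :=
  (longestCommonPrefix p.reverse q.reverse).reverse

/-!
A common prefix `a` and a common suffix `b` that overlap inside `p` (that is,
`|p| < |a| + |b|`) pin down the position of the first entry of `b` in `q` twice: at
index `|p| - |b|` through `a`, and at index `|q| - |b|` through `b`. If `q` has no
duplicates, these indices agree, so `|p| = |q|`, and then `a` and `b` together cover
both lists, forcing `p = q`.
-/

namespace List

variable {α : Type*} {a b p q : List α}

theorem eq_append_drop_of_isPrefix_of_isSuffix (ha : a <+: p) (hb : b <:+ p)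
    (hcover : p.length ≤ a.length + b.length) :
    p = a ++ b.drop (a.length + b.length - p.length) := by
  have hbp := hb.length_le
  have hdrop : p.drop a.length = b.drop (a.length + b.length - p.length) :=
    calc p.drop a.length
        = (p.drop (p.length - b.length)).drop (a.length + b.length - p.length) := by
          rw [drop_drop]; congr 1; omega
      _ = b.drop (a.length + b.length - p.length) := by rw [← suffix_iff_eq_drop.mp hb]
  calc p = p.take a.length ++ p.drop a.length := (take_append_drop _ _).symm
    _ = a ++ b.drop (a.length + b.length - p.length) := by
      rw [← prefix_iff_eq_take.mp ha, hdrop]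

theorem eq_of_isPrefix_of_isSuffix_of_length_eq (ha : a <+: p) (ha' : a <+: q)
    (hb : b <:+ p) (hb' : b <:+ q) (hlen : p.length = q.length)
    (hcover : p.length ≤ a.length + b.length) : p = q := by
  rw [eq_append_drop_of_isPrefix_of_isSuffix ha hb hcover,
    eq_append_drop_of_isPrefix_of_isSuffix ha' hb' (hlen ▸ hcover), hlen]

theorem length_eq_of_isPrefix_of_isSuffix_of_nodup (ha : a <+: p) (ha' : a <+: q)
    (hb : b <:+ p) (hb' : b <:+ q) (hq : q.Nodup)
    (hoverlap : p.length < a.length + b.length) : p.length = q.length := by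
  have hap := ha.length_le
  have haq := ha'.length_le
  have hbp := hb.length_le
  have hbq := hb'.length_le
  have hb0 : 0 < b.length := by omega
  have hi : p.length - b.length < a.length := by omega
  have hsame : q[p.length - b.length] = q[q.length - b.length] :=
    calc q[p.length - b.length] = a[p.length - b.length] := (ha'.getElem hi).symm
      _ = p[p.length - b.length] := ha.getElem hi
      _ = b[0] := by simpa using (hb.getElem hb0).symm
      _ = q[q.length - b.length] := by simpa using hb'.getElem hb0
  have := hq.getElem_inj_iff.mp hsame
  omega

theorem eq_of_isPrefix_of_isSuffix_of_nodup (ha : a <+: p) (ha' : a <+: q)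
    (hb : b <:+ p) (hb' : b <:+ q) (hq : q.Nodup)
    (hoverlap : p.length < a.length + b.length) : p = q :=
  eq_of_isPrefix_of_isSuffix_of_length_eq ha ha' hb hb'
    (length_eq_of_isPrefix_of_isSuffix_of_nodup ha ha' hb hb' hq hoverlap) hoverlap.le

end List

section

variable {α : Type*} [DecidableEq α]

theorem longestCommonPrefix_isPrefix (p q : List α) :
    longestCommonPrefix p q <+: p ∧ longestCommonPrefix p q <+: q := by
  induction p generalizing q with
  | nil => simp [longestCommonPrefix]
  | cons x xs ih =>
    cases q with
    | nil => simp [longestCommonPrefix]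
    | cons y ys =>
      rw [longestCommonPrefix]
      split_ifs with hxy
      · subst hxy
        exact ⟨(List.prefix_cons_inj x).mpr (ih ys).1, (List.prefix_cons_inj x).mpr (ih ys).2⟩
      · simp

theorem longestCommonSuffix_isSuffix (p q : List α) :
    longestCommonSuffix p q <:+ p ∧ longestCommonSuffix p q <:+ q := by
  obtain ⟨hp, hq⟩ := longestCommonPrefix_isPrefix p.reverse q.reverse
  exact ⟨List.reverse_prefix.mp (by simpa [longestCommonSuffix] using hp),
    List.reverse_prefix.mp (by simpa [longestCommonSuffix] using hq)⟩

end

/-- For finite duplicate-free lists `p ≠ q`, the length of the longest common prefix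
plus the length of the longest common suffix is at most `min |p| |q|`. -/
theorem lcp_length_add_lcs_length_le_min
    {α : Type*} [DecidableEq α] (p q : List α)
    (hp : p.Nodup) (hq : q.Nodup) (hne : p ≠ q) :
    (longestCommonPrefix p q).length + (longestCommonSuffix p q).length ≤
      min p.length q.length := by
  obtain ⟨ha, ha'⟩ := longestCommonPrefix_isPrefix p q
  obtain ⟨hb, hb'⟩ := longestCommonSuffix_isSuffix p q
  refine le_min (not_lt.mp fun h => hne ?_) (not_lt.mp fun h => hne ?_)
  · exact List.eq_of_isPrefix_of_isSuffix_of_nodup ha ha' hb hb' hq h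
  · exact (List.eq_of_isPrefix_of_isSuffix_of_nodup ha' ha hb' hb hp h).symm
end

section
/- Let p and q be finite lists over an arbitrary type, each containing no duplicate elements, with p ≠ q. Then the length of the longest common prefix of p and q plus the length of the longest common suffix of p and q is strictly less than max(|p|, |q|). (Hence in any transition at least the longer of the two traceroute paths has a nonempty changed portion.) -/
/-!
Strip the common heads of `p` and `q` one at a time. As the lists have no duplicates, a shared
head `a` occurs nowhere else in either list, so it cannot lie in a common suffix of two distinct
lists: removing it shortens the common prefix by one and leaves the common suffix unchanged.
Once the heads differ the common prefix is empty, and a common suffix of two distinct lists is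
shorter than the longer of them.
-/

theorem List.IsSuffix.length_lt_max_of_ne {α : Type*} {s p q : List α}
    (hp : s <:+ p) (hq : s <:+ q) (hne : p ≠ q) : s.length < max p.length q.length := by
  by_contra! h
  have hsp : s = p := hp.eq_of_length (le_antisymm hp.length_le (le_of_max_le_left h))
  have hsq : s = q := hq.eq_of_length (le_antisymm hq.length_le (le_of_max_le_right h))
  exact hne (hsp ▸ hsq)

section

variable {α : Type*} [DecidableEq α]

theorem longestCommonPrefix_prefix_left (p q : List α) : longestCommonPrefix p q <+: p := by
  fun_induction longestCommonPrefix p q with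
  | case1 => exact List.cons_prefix_cons.2 ⟨rfl, ‹_›⟩
  | _ => exact List.nil_prefix

theorem longestCommonPrefix_prefix_right (p q : List α) : longestCommonPrefix p q <+: q := by
  fun_induction longestCommonPrefix p q with
  | case1 => exact List.cons_prefix_cons.2 ⟨rfl, ‹_›⟩
  | _ => exact List.nil_prefix

theorem longestCommonSuffix_suffix_left (p q : List α) : longestCommonSuffix p q <:+ p := by
  simpa [longestCommonSuffix] using (longestCommonPrefix_prefix_left p.reverse q.reverse).reverse

theorem longestCommonSuffix_suffix_right (p q : List α) : longestCommonSuffix p q <:+ q := by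
  simpa [longestCommonSuffix] using (longestCommonPrefix_prefix_right p.reverse q.reverse).reverse

theorem longestCommonSuffix_length_lt_max {p q : List α} (hne : p ≠ q) :
    (longestCommonSuffix p q).length < max p.length q.length :=
  (longestCommonSuffix_suffix_left p q).length_lt_max_of_ne
    (longestCommonSuffix_suffix_right p q) hne

theorem longestCommonPrefix_append_singleton {a : α} {x y : List α}
    (hx : a ∉ x) (hy : a ∉ y) (hne : x ≠ y) :
    longestCommonPrefix (x ++ [a]) (y ++ [a]) = longestCommonPrefix x y := by
  fun_induction longestCommonPrefix x y with
  | case1 => simp_all [longestCommonPrefix]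
  | case2 _ _ _ _ hcb => simp [longestCommonPrefix, hcb]
  | case3 x y hxy =>
    match x, y with
    | [], [] => exact absurd rfl hne
    | [], b :: _ => simp_all [longestCommonPrefix]
    | c :: _, [] => simp_all [longestCommonPrefix, eq_comm]
    | c :: xs, b :: ys => exact (hxy c xs b ys rfl rfl).elim

theorem longestCommonSuffix_cons_cons {a : α} {as bs : List α}
    (ha : a ∉ as) (hb : a ∉ bs) (hne : as ≠ bs) :
    longestCommonSuffix (a :: as) (a :: bs) = longestCommonSuffix as bs := by
  simp only [longestCommonSuffix, List.reverse_cons]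
  rw [longestCommonPrefix_append_singleton (by simpa) (by simpa) (by simpa using hne)]

end

/-- For finite duplicate-free lists `p ≠ q`, the length of the longest common prefix
plus the length of the longest common suffix is strictly less than `max |p| |q|`. -/
theorem lcp_length_add_lcs_length_lt_max
    {α : Type*} [DecidableEq α] (p q : List α)
    (hp : p.Nodup) (hq : q.Nodup) (hne : p ≠ q) :
    (longestCommonPrefix p q).length + (longestCommonSuffix p q).length <
      max p.length q.length := by
  fun_induction longestCommonPrefix p q with
  | case1 as a bs ih =>
    obtain ⟨ha, has⟩ := List.nodup_cons.1 hp
    obtain ⟨hb, hbs⟩ := List.nodup_cons.1 hq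
    have htail : as ≠ bs := by simpa using hne
    have := ih has hbs htail
    rw [longestCommonSuffix_cons_cons ha hb htail]
    simp only [List.length_cons]
    omega
  | _ => simpa using longestCommonSuffix_length_lt_max hne
end

section
/- Let G be a simple graph, h a vertex, and E↓ a set of edges of G each incident to h. Let (l_i)_{i ∈ S} be a family of finite lists of vertices, indexed by a nonempty finite set S, such that for every i ∈ S the list l_i contains two consecutive entries u, w with the unordered pair {u, w} belonging to E↓. Then h is an element of l_i for every i ∈ S, and for all i, j ∈ S the sets of elements of l_i and l_j have nonempty intersection. (In the paper's terminology: if every transition's changed pre-portion traverses a link of a physical down event with hub h, then the hub appears in every changed pre-portion, so all sd-pairs in the event's scope are pairwise pre-empathic.) -/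
theorem List.mem_of_infix_of_mem_sym2 {α : Type*} {u w x : α} {l : List α}
    (hl : [u, w] <:+: l) (hx : x ∈ s(u, w)) : x ∈ l :=
  hl.subset (by simpa [Sym2.mem_iff] using hx)

theorem hub_mem_and_pairwise_preEmpathic_general
    {V : Type*} {ι : Type*} (h : V) (Edown : Set (Sym2 V))
    (hinc : ∀ e ∈ Edown, h ∈ e)
    (S : Finset ι) (l : ι → List V)
    (hedge : ∀ i ∈ S, ∃ u w : V, [u, w] <:+: l i ∧ s(u, w) ∈ Edown) :
    (∀ i ∈ S, h ∈ l i) ∧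
    (∀ i ∈ S, ∀ j ∈ S, ({x | x ∈ l i} ∩ {x | x ∈ l j}).Nonempty) := by
  have hub_mem : ∀ i ∈ S, h ∈ l i := fun i hi => by
    obtain ⟨u, w, hinfix, hdown⟩ := hedge i hi
    exact List.mem_of_infix_of_mem_sym2 hinfix (hinc _ hdown)
  exact ⟨hub_mem, fun i hi j hj => ⟨h, hub_mem i hi, hub_mem j hj⟩⟩

/-- If every list `l i` (the changed pre-portion of the transition of sd-pair `i`)
contains two consecutive entries forming an edge of a physical down event `E↓` whose
edges are all incident to the hub `h`, then `h` appears in every `l i`, and the element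
sets of any two of the lists intersect (all sd-pairs are pairwise pre-empathic). -/
theorem hub_mem_and_pairwise_preEmpathic
    {V : Type*} {ι : Type*} (G : SimpleGraph V) (h : V) (Edown : Set (Sym2 V))
    (hsub : Edown ⊆ G.edgeSet) (hinc : ∀ e ∈ Edown, h ∈ e)
    (S : Finset ι) (hS : S.Nonempty) (l : ι → List V)
    (hedge : ∀ i ∈ S, ∃ u w : V, [u, w] <:+: l i ∧ s(u, w) ∈ Edown) :
    (∀ i ∈ S, h ∈ l i) ∧
    (∀ i ∈ S, ∀ j ∈ S, ({x | x ∈ l i} ∩ {x | x ∈ l j}).Nonempty) :=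
  hub_mem_and_pairwise_preEmpathic_general h Edown hinc S l hedge
end

section
/- (Completeness for down events.) Let G be a simple graph, E↓ a set of edges of G all incident to a hub vertex h, and t̄ ∈ ℝ the time at which the down event E↓ occurs. Let S be a nonempty finite set of source–destination pairs and, for each i ∈ S, let the corresponding transition have activity interval [a i, b i) with a i ≤ t̄ < b i, and changed pre-portion a finite list δ_i of vertices containing two consecutive entries u, w with {u, w} ∈ E↓. Set t₁ = max_{i∈S} a i and t₂ = min_{i∈S} b i. Then t₁ ≤ t̄ < t₂; for every i ∈ S the interval [t₁, t₂) is contained in [a i, b i) (all transitions are active throughout [t₁, t₂)); and h is an element of δ_i for every i ∈ S. (Hence the algorithm constructs the candidate event (t₁, t₂, S, h^pre), so for every visible physical down event an inferred event containing the hub among its reported addresses is produced.) -/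
theorem Finset.Ico_sup'_inf'_subset_Ico {ι α : Type*} [LinearOrder α] {S : Finset ι}
    (hS : S.Nonempty) (a b : ι → α) {i : ι} (hi : i ∈ S) :
    Set.Ico (S.sup' hS a) (S.inf' hS b) ⊆ Set.Ico (a i) (b i) :=
  Set.Ico_subset_Ico (S.le_sup' a hi) (S.inf'_le b hi)

theorem List.mem_of_pair_infix {V : Type*} {u w h : V} {l : List V}
    (hinfix : [u, w] <:+: l) (hh : h ∈ s(u, w)) : h ∈ l := by
  rcases Sym2.mem_iff.mp hh with rfl | rfl <;> exact hinfix.mem (by simp)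

theorem completeness_down_event_general
    {V : Type*} {ι : Type*} (Edown : Set (Sym2 V)) (h : V)
    (hinc : ∀ e ∈ Edown, h ∈ e) (tbar : ℝ)
    (S : Finset ι) (hS : S.Nonempty) (a b : ι → ℝ)
    (hact : ∀ i ∈ S, a i ≤ tbar ∧ tbar < b i)
    (δ : ι → List V)
    (hedge : ∀ i ∈ S, ∃ u w : V, [u, w] <:+: δ i ∧ s(u, w) ∈ Edown) :
    S.sup' hS a ≤ tbar ∧ tbar < S.inf' hS b ∧
    (∀ i ∈ S, Set.Ico (S.sup' hS a) (S.inf' hS b) ⊆ Set.Ico (a i) (b i)) ∧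
    (∀ i ∈ S, h ∈ δ i) := by
  refine ⟨S.sup'_le hS a fun i hi => (hact i hi).1,
    (S.lt_inf'_iff hS).2 fun i hi => (hact i hi).2,
    fun i hi => S.Ico_sup'_inf'_subset_Ico hS a b hi, fun i hi => ?_⟩
  obtain ⟨u, w, hinfix, hdown⟩ := hedge i hi
  exact List.mem_of_pair_infix hinfix (hinc _ hdown)

/-- Completeness for down events: given a physical down event `E↓` of a simple graph `G`
with hub `h` occurring at time `t̄`, a nonempty finite scope `S` of sd-pairs whose
transitions have activity intervals `[a i, b i)` containing `t̄` and changed pre-portions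
`δ i` each containing two consecutive entries forming an edge of `E↓`, the interval
`[t₁, t₂) = [max a, min b)` contains `t̄`, is contained in every activity interval, and
the hub `h` appears in every changed pre-portion `δ i`. -/
theorem completeness_down_event
    {V : Type*} {ι : Type*} (G : SimpleGraph V) (Edown : Set (Sym2 V)) (h : V)
    (hsub : Edown ⊆ G.edgeSet) (hinc : ∀ e ∈ Edown, h ∈ e) (tbar : ℝ)
    (S : Finset ι) (hS : S.Nonempty) (a b : ι → ℝ)
    (hact : ∀ i ∈ S, a i ≤ tbar ∧ tbar < b i)
    (δ : ι → List V)
    (hedge : ∀ i ∈ S, ∃ u w : V, [u, w] <:+: δ i ∧ s(u, w) ∈ Edown) :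
    S.sup' hS a ≤ tbar ∧ tbar < S.inf' hS b ∧
    (∀ i ∈ S, Set.Ico (S.sup' hS a) (S.inf' hS b) ⊆ Set.Ico (a i) (b i)) ∧
    (∀ i ∈ S, h ∈ δ i) :=
  completeness_down_event_general Edown h hinc tbar S hS a b hact δ hedge
end

section
/- (Completeness for up events.) Let G be a simple graph, E↑ a set of edges all incident to a hub vertex h, and t̄ ∈ ℝ the time at which the up event E↑ occurs. Let S be a nonempty finite set of source–destination pairs and, for each i ∈ S, let the corresponding transition have activity interval [a i, b i) with a i ≤ t̄ < b i, and changed post-portion a finite list δ'_i of vertices containing two consecutive entries u, w with {u, w} ∈ E↑. Set t₁ = max_{i∈S} a i and t₂ = min_{i∈S} b i. Then t₁ ≤ t̄ < t₂; for every i ∈ S the interval [t₁, t₂) is contained in [a i, b i); and h is an element of δ'_i for every i ∈ S. (Hence all pairs in the scope are pairwise post-empathic throughout [t₁, t₂) and the algorithm constructs the candidate event (t₁, t₂, S, h^post).) -/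
theorem List.mem_of_pair_infix_of_mem_sym2 {α : Type*} {l : List α} {u w x : α}
    (hl : [u, w] <:+: l) (hx : x ∈ s(u, w)) : x ∈ l := by
  rcases Sym2.mem_iff.1 hx with rfl | rfl <;> exact hl.subset (by simp)

theorem completeness_up_event_general
    {V : Type*} {ι : Type*} (Eup : Set (Sym2 V)) (h : V)
    (hinc : ∀ e ∈ Eup, h ∈ e) (tbar : ℝ)
    (S : Finset ι) (hS : S.Nonempty) (a b : ι → ℝ)
    (hact : ∀ i ∈ S, a i ≤ tbar ∧ tbar < b i)
    (δ' : ι → List V)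
    (hedge : ∀ i ∈ S, ∃ u w : V, [u, w] <:+: δ' i ∧ s(u, w) ∈ Eup) :
    S.sup' hS a ≤ tbar ∧ tbar < S.inf' hS b ∧
    (∀ i ∈ S, Set.Ico (S.sup' hS a) (S.inf' hS b) ⊆ Set.Ico (a i) (b i)) ∧
    (∀ i ∈ S, h ∈ δ' i) := by
  refine ⟨S.sup'_le hS a fun i hi => (hact i hi).1,
    (S.lt_inf'_iff hS).2 fun i hi => (hact i hi).2,
    fun i hi => S.Ico_sup'_inf'_subset_Ico hS a b hi, fun i hi => ?_⟩
  obtain ⟨u, w, hinfix, hup⟩ := hedge i hi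
  exact List.mem_of_pair_infix_of_mem_sym2 hinfix (hinc _ hup)

/-- Completeness for up events: given a physical up event `E↑` (a set of edges, i.e.
unordered pairs of distinct vertices, all incident to the hub `h`) occurring at time
`t̄`, a nonempty finite scope `S` of sd-pairs whose transitions have activity intervals
`[a i, b i)` containing `t̄` and changed post-portions `δ' i` each containing two
consecutive entries forming an edge of `E↑`, the interval `[t₁, t₂) = [max a, min b)`
contains `t̄`, is contained in every activity interval, and the hub `h` appears in every
changed post-portion `δ' i`. -/
theorem completeness_up_event
    {V : Type*} {ι : Type*} (G : SimpleGraph V) (Eup : Set (Sym2 V)) (h : V)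
    (hndiag : ∀ e ∈ Eup, ¬ e.IsDiag) (hinc : ∀ e ∈ Eup, h ∈ e) (tbar : ℝ)
    (S : Finset ι) (hS : S.Nonempty) (a b : ι → ℝ)
    (hact : ∀ i ∈ S, a i ≤ tbar ∧ tbar < b i)
    (δ' : ι → List V)
    (hedge : ∀ i ∈ S, ∃ u w : V, [u, w] <:+: δ' i ∧ s(u, w) ∈ Eup) :
    S.sup' hS a ≤ tbar ∧ tbar < S.inf' hS b ∧
    (∀ i ∈ S, Set.Ico (S.sup' hS a) (S.inf' hS b) ⊆ Set.Ico (a i) (b i)) ∧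
    (∀ i ∈ S, h ∈ δ' i) :=
  completeness_up_event_general Eup h hinc tbar S hS a b hact δ' hedge
end
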